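/- arXiv:1611.03943 — 3 statements merged into one kernel-verified Lean document; each statement's English description precedes it below -/
import Mathlib

section
/- Let (G,β,R) be a reduced skew root system of Lie type whose graph (R,E) is disconnected, with connected component R_1 and complement R_2 = R ∖ R_1. Let G_i be the subgroup generated by R_i and β_i = β|_{G_i}. Then G = G_1 ⊕ G_2 is an orthogonal direct sum of nonsingular symplectic abelian groups, and each (G_i, β_i, R_i) is a skew root system of Lie type. -/
/-- A bicharacter of `G` with values in `Fˣ`. -/
def IsBichar {G : Type*} [AddCommGroup G] {F : Type*} [Field F] (ξ : G → G → Fˣ) : Prop :=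
  (∀ a b c : G, ξ (a + b) c = ξ a c * ξ b c) ∧ (∀ a b c : G, ξ a (b + c) = ξ a b * ξ a c)

/-- An alternating bicharacter of `G`. -/
def IsAltBichar {G : Type*} [AddCommGroup G] {F : Type*} [Field F] (β : G → G → Fˣ) : Prop :=
  IsBichar β ∧ ∀ g : G, β g g = 1

/-- `R` is a skew root system of Lie type in `(G, β)`. -/
def IsSkewRootLie {G : Type*} [AddCommGroup G] {F : Type*} [Field F]
    (β : G → G → Fˣ) (R : Set G) : Prop :=
  (∀ a ∈ R, ∃ h : G, β a h ≠ 1) ∧ AddSubgroup.closure R = ⊤ ∧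
  (∀ a ∈ R, -a ∈ R) ∧ ∀ a ∈ R, ∀ b ∈ R, β a b ≠ 1 → a + b ∈ R

/-- Adjacency in the graph of a skew root system of Lie type. -/
def LieGraphAdj {G : Type*} [AddCommGroup G] {F : Type*} [Field F]
    (β : G → G → Fˣ) (R : Set G) (a b : G) : Prop :=
  a ∈ R ∧ b ∈ R ∧ a ≠ b ∧ β a b ≠ 1

/-!
A root `a` is never orthogonal to all of `R`: otherwise, since `R` generates `G`, it would be
orthogonal to everything, against the first axiom. Any subset `C ⊆ R` that is a union of connected
components of the graph is therefore closed under negation (`-a` is joined to a neighbour of `a`)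
and under the partial sum (`a + b` is joined to `a`, since `β a (a + b) = β a b`), and its roots
have neighbours in `C`; the same holds for `R ∖ C`. Roots in different components are orthogonal,
hence so are the subgroups `G₁`, `G₂` they generate, and as `G₁ + G₂ = G` the trivial radical of
`β` forces both the trivial intersection and the nonsingularity of each `βᵢ`.
-/

section Bichar

variable {G : Type*} [AddCommGroup G] {F : Type*} [Field F] {β : G → G → Fˣ}

namespace IsBichar

theorem flip (hb : IsBichar β) : IsBichar (fun a b => β b a) :=
  ⟨fun a b c => hb.2 c a b, fun a b c => hb.1 b c a⟩

theorem map_zero_right (hb : IsBichar β) (g : G) : β g 0 = 1 :=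
  right_eq_mul.mp (by simpa only [add_zero] using hb.2 g 0 0)

theorem map_neg_right (hb : IsBichar β) (g h : G) : β g (-h) = (β g h)⁻¹ :=
  eq_inv_of_mul_eq_one_right (by rw [← hb.2, add_neg_cancel, hb.map_zero_right])

theorem eq_one_of_mem_closure_right (hb : IsBichar β) {S : Set G} {g x : G}
    (h : ∀ b ∈ S, β g b = 1) (hx : x ∈ AddSubgroup.closure S) : β g x = 1 := by
  induction hx using AddSubgroup.closure_induction with
  | mem y hy => exact h y hy
  | zero => exact hb.map_zero_right g
  | add y z _ _ hy hz => rw [hb.2, hy, hz, one_mul]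
  | neg y _ hy => rw [hb.map_neg_right, hy, inv_one]

theorem eq_one_of_mem_closure (hb : IsBichar β) {S T : Set G}
    (h : ∀ a ∈ S, ∀ b ∈ T, β a b = 1) :
    ∀ g ∈ AddSubgroup.closure S, ∀ x ∈ AddSubgroup.closure T, β g x = 1 := fun _ hg _ hx =>
  hb.eq_one_of_mem_closure_right
    (fun b hbT => hb.flip.eq_one_of_mem_closure_right (fun a ha => h a ha b hbT) hg) hx

theorem eq_zero_of_sup_eq_top (hb : IsBichar β)
    (hred : ∀ g : G, (∀ h : G, β g h = 1) → g = 0) {H₁ H₂ : AddSubgroup G}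
    (hsup : H₁ ⊔ H₂ = ⊤) {g : G} (h₁ : ∀ x ∈ H₁, β g x = 1) (h₂ : ∀ y ∈ H₂, β g y = 1) :
    g = 0 := by
  refine hred g fun h => ?_
  obtain ⟨x, hx, y, hy, rfl⟩ := AddSubgroup.mem_sup.mp (hsup ▸ AddSubgroup.mem_top h)
  rw [hb.2, h₁ x hx, h₂ y hy, one_mul]

theorem nonsingular_of_orthogonal_sup_eq_top (hb : IsBichar β)
    (hred : ∀ g : G, (∀ h : G, β g h = 1) → g = 0) {H₁ H₂ : AddSubgroup G}
    (hsup : H₁ ⊔ H₂ = ⊤) (horth : ∀ g ∈ H₁, ∀ h ∈ H₂, β g h = 1) :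
    ∀ g ∈ H₁, (∀ h ∈ H₁, β g h = 1) → g = 0 := fun g hg hH₁ =>
  hb.eq_zero_of_sup_eq_top hred hsup hH₁ (horth g hg)

end IsBichar

namespace IsAltBichar

theorem swap (hβ : IsAltBichar β) (a b : G) : β b a = (β a b)⁻¹ := by
  have h := hβ.2 (a + b)
  rw [hβ.1.1, hβ.1.2, hβ.1.2, hβ.2, hβ.2, one_mul, mul_one] at h
  exact eq_inv_of_mul_eq_one_left (by rw [mul_comm, h])

theorem eq_one_comm (hβ : IsAltBichar β) {a b : G} : β a b = 1 ↔ β b a = 1 := by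
  rw [hβ.swap, inv_eq_one]

theorem inf_eq_bot_of_orthogonal_sup_eq_top (hβ : IsAltBichar β)
    (hred : ∀ g : G, (∀ h : G, β g h = 1) → g = 0) {H₁ H₂ : AddSubgroup G}
    (hsup : H₁ ⊔ H₂ = ⊤) (horth : ∀ g ∈ H₁, ∀ h ∈ H₂, β g h = 1) : H₁ ⊓ H₂ = ⊥ :=
  (AddSubgroup.eq_bot_iff_forall _).mpr fun g hg =>
    hβ.1.nonsingular_of_orthogonal_sup_eq_top hred hsup horth g hg.1
      fun h hh => hβ.eq_one_comm.mp (horth h hh g hg.2)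

end IsAltBichar

theorem IsSkewRootLie.exists_mem_ne_one {R : Set G} (hb : IsBichar β) (hR : IsSkewRootLie β R)
    {a : G} (ha : a ∈ R) : ∃ b ∈ R, β a b ≠ 1 := by
  by_contra! horth
  obtain ⟨h, hh⟩ := hR.1 a ha
  exact hh (hb.eq_one_of_mem_closure_right horth (hR.2.1 ▸ AddSubgroup.mem_top h))

end Bichar

/-- `C` is a union of connected components of the graph of `R`. -/
structure IsLieComponentUnion {G : Type*} {F : Type*} [Field F]
    (β : G → G → Fˣ) (R C : Set G) : Prop where
  subset : C ⊆ R
  mem_iff : ∀ a ∈ R, ∀ b ∈ R, β a b ≠ 1 → (a ∈ C ↔ b ∈ C)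

open Relation in
theorem isLieComponentUnion_reflTransGen {G : Type*} [AddCommGroup G] {F : Type*} [Field F]
    {β : G → G → Fˣ} (hβ : IsAltBichar β) (R : Set G) (a₀ : G) :
    IsLieComponentUnion β R {b | b ∈ R ∧ ReflTransGen (LieGraphAdj β R) a₀ b} := by
  have step : ∀ {a b}, a ∈ R → b ∈ R → β a b ≠ 1 →
      ReflTransGen (LieGraphAdj β R) a₀ a → ReflTransGen (LieGraphAdj β R) a₀ b :=
    fun ha hb hab hpath => hpath.tail ⟨ha, hb, fun hba => hab (hba ▸ hβ.2 _), hab⟩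
  exact ⟨fun b hb => hb.1, fun a ha b hb hab =>
    ⟨fun h => ⟨hb, step ha hb hab h.2⟩, fun h => ⟨ha, step hb ha (mt hβ.eq_one_comm.mpr hab) h.2⟩⟩⟩

namespace IsLieComponentUnion

variable {G : Type*} {F : Type*} [Field F] {β : G → G → Fˣ} {R C : Set G}

theorem diff (hC : IsLieComponentUnion β R C) : IsLieComponentUnion β R (R \ C) :=
  ⟨Set.sdiff_subset, fun a ha b hb hab => by
    simp only [Set.mem_sdiff, ha, hb, true_and, hC.mem_iff a ha b hb hab]⟩

theorem orthogonal_diff (hC : IsLieComponentUnion β R C) :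
    ∀ a ∈ C, ∀ b ∈ R \ C, β a b = 1 := fun a ha b hb => by
  by_contra hab
  exact hb.2 ((hC.mem_iff a (hC.subset ha) b hb.1 hab).mp ha)

variable [AddCommGroup G]

theorem exists_mem_closure_ne_one (hβ : IsAltBichar β) (hR : IsSkewRootLie β R)
    (hC : IsLieComponentUnion β R C) {a : G} (ha : a ∈ C) :
    ∃ h ∈ AddSubgroup.closure C, β a h ≠ 1 := by
  obtain ⟨b, hb, hab⟩ := hR.exists_mem_ne_one hβ.1 (hC.subset ha)
  exact ⟨b, AddSubgroup.subset_closure ((hC.mem_iff a (hC.subset ha) b hb hab).mp ha), hab⟩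

theorem neg_mem (hβ : IsAltBichar β) (hR : IsSkewRootLie β R) (hC : IsLieComponentUnion β R C)
    {a : G} (ha : a ∈ C) : -a ∈ C := by
  have haR := hC.subset ha
  obtain ⟨b, hb, hab⟩ := hR.exists_mem_ne_one hβ.1 haR
  have hba : β b (-a) ≠ 1 := by rwa [hβ.1.map_neg_right, hβ.swap, inv_inv]
  exact (hC.mem_iff b hb (-a) (hR.2.2.1 a haR) hba).mp ((hC.mem_iff a haR b hb hab).mp ha)

theorem add_mem (hβ : IsAltBichar β) (hR : IsSkewRootLie β R) (hC : IsLieComponentUnion β R C)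
    {a b : G} (ha : a ∈ C) (hb : b ∈ C) (hab : β a b ≠ 1) : a + b ∈ C := by
  have hsum : β a (a + b) ≠ 1 := by rwa [hβ.1.2, hβ.2, one_mul]
  exact (hC.mem_iff a (hC.subset ha) (a + b)
    (hR.2.2.2 a (hC.subset ha) b (hC.subset hb) hab) hsum).mp ha

end IsLieComponentUnion

theorem skewRootLie_disconnected_decomposes_general
    {G : Type*} [AddCommGroup G] {F : Type*} [Field F]
    (β : G → G → Fˣ) (hβ : IsAltBichar β)
    (hred : ∀ g : G, (∀ h : G, β g h = 1) → g = 0)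
    (R : Set G) (hR : IsSkewRootLie β R)
    (a₀ : G)
    (R₁ R₂ : Set G)
    (hR₁ : R₁ = {b | b ∈ R ∧ Relation.ReflTransGen (LieGraphAdj β R) a₀ b})
    (hR₂ : R₂ = R \ R₁)
    (G₁ G₂ : AddSubgroup G)
    (hG₁ : G₁ = AddSubgroup.closure R₁) (hG₂ : G₂ = AddSubgroup.closure R₂) :
    (G₁ ⊓ G₂ = ⊥ ∧ G₁ ⊔ G₂ = ⊤ ∧ ∀ g ∈ G₁, ∀ h ∈ G₂, β g h = 1) ∧
    ((∀ g ∈ G₁, (∀ h ∈ G₁, β g h = 1) → g = 0) ∧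
     (∀ g ∈ G₂, (∀ h ∈ G₂, β g h = 1) → g = 0)) ∧
    ((∀ a ∈ R₁, ∃ h ∈ G₁, β a h ≠ 1) ∧ (∀ a ∈ R₁, -a ∈ R₁) ∧
      (∀ a ∈ R₁, ∀ b ∈ R₁, β a b ≠ 1 → a + b ∈ R₁)) ∧
    ((∀ a ∈ R₂, ∃ h ∈ G₂, β a h ≠ 1) ∧ (∀ a ∈ R₂, -a ∈ R₂) ∧
      (∀ a ∈ R₂, ∀ b ∈ R₂, β a b ≠ 1 → a + b ∈ R₂)) := by
  subst hG₁ hG₂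
  have h₁ : IsLieComponentUnion β R R₁ := hR₁ ▸ isLieComponentUnion_reflTransGen hβ R a₀
  have h₂ : IsLieComponentUnion β R R₂ := hR₂ ▸ h₁.diff
  have hsup : AddSubgroup.closure R₁ ⊔ AddSubgroup.closure R₂ = ⊤ := by
    rw [hR₂, ← AddSubgroup.closure_union, Set.union_sdiff_cancel h₁.subset, hR.2.1]
  have horth : ∀ g ∈ AddSubgroup.closure R₁, ∀ h ∈ AddSubgroup.closure R₂, β g h = 1 :=
    hβ.1.eq_one_of_mem_closure (hR₂ ▸ h₁.orthogonal_diff)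
  exact ⟨⟨hβ.inf_eq_bot_of_orthogonal_sup_eq_top hred hsup horth, hsup, horth⟩,
    ⟨hβ.1.nonsingular_of_orthogonal_sup_eq_top hred hsup horth,
      hβ.1.nonsingular_of_orthogonal_sup_eq_top hred (sup_comm _ (AddSubgroup.closure R₂) ▸ hsup)
        fun g hg h hh => hβ.eq_one_comm.mp (horth h hh g hg)⟩,
    ⟨fun _ => h₁.exists_mem_closure_ne_one hβ hR, fun _ => h₁.neg_mem hβ hR,
      fun _ ha _ => h₁.add_mem hβ hR ha⟩,
    ⟨fun _ => h₂.exists_mem_closure_ne_one hβ hR, fun _ => h₂.neg_mem hβ hR,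
      fun _ ha _ => h₂.add_mem hβ hR ha⟩⟩

/-- Let `(G,β,R)` be a reduced skew root system of Lie type whose graph is disconnected:
`R₁` is the connected component of a vertex `a₀` and `R₂ = R ∖ R₁` is nonempty.  With
`Gᵢ` the subgroup generated by `Rᵢ` and `βᵢ = β|_{Gᵢ}`:  `G = G₁ ⊕ G₂` is an orthogonal
direct sum, each `(Gᵢ,βᵢ)` is nonsingular, and each `(Gᵢ,βᵢ,Rᵢ)` is a skew root system
of Lie type. -/
theorem skewRootLie_disconnected_decomposes
    {G : Type*} [AddCommGroup G] {F : Type*} [Field F] [IsAlgClosed F] [CharZero F]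
    (β : G → G → Fˣ) (hβ : IsAltBichar β)
    (hred : ∀ g : G, (∀ h : G, β g h = 1) → g = 0)
    (R : Set G) (hR : IsSkewRootLie β R)
    (a₀ : G) (ha₀ : a₀ ∈ R)
    (R₁ R₂ : Set G)
    (hR₁ : R₁ = {b | b ∈ R ∧ Relation.ReflTransGen (LieGraphAdj β R) a₀ b})
    (hR₂ : R₂ = R \ R₁) (hdis : R₂.Nonempty)
    (G₁ G₂ : AddSubgroup G)
    (hG₁ : G₁ = AddSubgroup.closure R₁) (hG₂ : G₂ = AddSubgroup.closure R₂) :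
    (G₁ ⊓ G₂ = ⊥ ∧ G₁ ⊔ G₂ = ⊤ ∧ ∀ g ∈ G₁, ∀ h ∈ G₂, β g h = 1) ∧
    ((∀ g ∈ G₁, (∀ h ∈ G₁, β g h = 1) → g = 0) ∧
     (∀ g ∈ G₂, (∀ h ∈ G₂, β g h = 1) → g = 0)) ∧
    ((∀ a ∈ R₁, ∃ h ∈ G₁, β a h ≠ 1) ∧ (∀ a ∈ R₁, -a ∈ R₁) ∧
      (∀ a ∈ R₁, ∀ b ∈ R₁, β a b ≠ 1 → a + b ∈ R₁)) ∧
    ((∀ a ∈ R₂, ∃ h ∈ G₂, β a h ≠ 1) ∧ (∀ a ∈ R₂, -a ∈ R₂) ∧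
      (∀ a ∈ R₂, ∀ b ∈ R₂, β a b ≠ 1 → a + b ∈ R₂)) :=
  skewRootLie_disconnected_decomposes_general β hβ hred R hR a₀ R₁ R₂ hR₁ hR₂ G₁ G₂ hG₁ hG₂
end

section
/- Let (G,β,R) be a reduced and indecomposable skew root system of Lie type. Then the Lie algebra L(R) = ⊕_{a∈R} F u_a (a subalgebra of the twisted group algebra under the commutator bracket) is a simple Lie algebra. -/
/-- A 2-cocycle on the abelian group `G` with values in `Fˣ` (trivial action). -/
def IsCocycle {G : Type*} [AddCommGroup G] {F : Type*} [Field F] (ξ : G → G → Fˣ) : Prop :=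
  ∀ a b c : G, ξ a b * ξ (a + b) c = ξ b c * ξ a (b + c)

/-!
Since `ξ(a,b) = β(a,b) ξ(b,a)`, the bracket `[u_a, u_b] = (ξ(a,b) - ξ(b,a)) u_{a+b}` vanishes
exactly when `β(a,b) = 1`. So bracketing with `u_c` (`c ∈ R`) translates the support of an element
by `c`, after discarding the part of the support orthogonal to `c`. In a nonzero ideal take an
element whose support `s ⊆ R` is as small as possible. By minimality each `c ∈ R` is orthogonal
to all of `s` or to none of it; taking `c ∈ s` shows that `s` is totally isotropic. If `c` is
orthogonal to none of `s`, the translate `c + s` is again a minimal support, hence isotropic, and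
this forces `β(c,p) = β(c,q)` for all `p, q ∈ s`. As `R` generates `G` and `β` is nondegenerate,
`s` is a single root `p`, so `u_p` lies in the ideal, and connectedness of `R` spreads this to
every `u_b`, `b ∈ R`.
-/

section

variable {G : Type*} {F : Type*} [Field F] {β : G → G → Fˣ}

section Bichar

variable [AddCommGroup G]

theorem IsBichar.map_zero_left (hβ : IsBichar β) (a : G) : β 0 a = 1 := by
  simpa using hβ.1 0 0 a

theorem IsBichar.map_neg_left (hβ : IsBichar β) (a b : G) : β (-a) b = (β a b)⁻¹ := by
  rw [eq_inv_iff_mul_eq_one, ← hβ.1, neg_add_cancel, hβ.map_zero_left]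

theorem IsBichar.map_sub_right (hβ : IsBichar β) (a b c : G) :
    β a (b - c) = β a b * (β a c)⁻¹ := by
  rw [eq_mul_inv_iff_mul_eq, ← hβ.2, sub_add_cancel]

theorem IsBichar.map_eq_one_of_closure_eq_top {R : Set G} (hβ : IsBichar β)
    (hR : AddSubgroup.closure R = ⊤) {g : G} (h : ∀ c ∈ R, β c g = 1) (x : G) : β x g = 1 := by
  have hx : x ∈ AddSubgroup.closure R := hR ▸ AddSubgroup.mem_top x
  induction hx using AddSubgroup.closure_induction with
  | mem c hc => exact h c hc
  | zero => exact hβ.map_zero_left g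
  | add a b _ _ ha hb => rw [hβ.1, ha, hb, one_mul]
  | neg a _ ha => rw [hβ.map_neg_left, ha, inv_one]

theorem IsAltBichar.map_swap (hβ : IsAltBichar β) (a b : G) : β b a = (β a b)⁻¹ := by
  have h := hβ.2 (a + b)
  rw [hβ.1.1, hβ.1.2, hβ.1.2, hβ.2, hβ.2, one_mul, mul_one] at h
  rw [eq_inv_iff_mul_eq_one, mul_comm, h]

theorem IsAltBichar.exists_mem_mem_ne_one {R : Set G} (hβ : IsAltBichar β)
    (hR : AddSubgroup.closure R = ⊤) (hnt : ∃ g h : G, β g h ≠ 1) :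
    ∃ a ∈ R, ∃ b ∈ R, β a b ≠ 1 := by
  obtain ⟨g, h, hgh⟩ := hnt
  by_contra! hRR
  have hRh : ∀ c ∈ R, β c h = 1 := fun c hc => by
    rw [hβ.map_swap, hβ.1.map_eq_one_of_closure_eq_top hR (fun a ha => hRR a ha c hc), inv_one]
  exact hgh (hβ.1.map_eq_one_of_closure_eq_top hR hRh g)

end Bichar

namespace SkewRootLie

section

def bracketCoeff (ξ : G → G → Fˣ) (x y : G) : F := ξ x y - ξ y x

theorem bracketCoeff_eq_zero_iff {ξ : G → G → Fˣ} (hΨ : ∀ a b : G, ξ a b * (ξ b a)⁻¹ = β a b)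
    (x y : G) : bracketCoeff ξ x y = 0 ↔ β x y = 1 := by
  rw [bracketCoeff, sub_eq_zero, Units.val_inj, ← hΨ, mul_inv_eq_one]

variable {M : Type*} [AddCommMonoid M] [Module F M]

def IsRootSupport (I : Submodule F M) (u : G → M) (R : Set G) (s : Finset G) : Prop :=
  s.Nonempty ∧ (↑s : Set G) ⊆ R ∧ ∃ f : G → F, (∀ a ∈ s, f a ≠ 0) ∧ ∑ a ∈ s, f a • u a ∈ I

theorem exists_isRootSupport {I : Submodule F M} {u : G → M} {R : Set G}
    (hIle : I ≤ Submodule.span F (u '' R)) (hbot : I ≠ ⊥) : ∃ s, IsRootSupport I u R s := by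
  obtain ⟨x, hxI, hx0⟩ := (Submodule.ne_bot_iff I).mp hbot
  obtain ⟨l, hlR, rfl⟩ := (Finsupp.mem_span_image_iff_linearCombination F).mp (hIle hxI)
  refine ⟨l.support, Finsupp.support_nonempty_iff.mpr fun hl => hx0 (by rw [hl, map_zero]),
    (Finsupp.mem_supported F l).mp hlR, l, fun a ha => Finsupp.mem_support_iff.mp ha, hxI⟩

end

variable [AddCommGroup G]

open Classical in
/-- The support of `[u_c, x]` when `x` has support `s`. -/
noncomputable def bracketSupport (β : G → G → Fˣ) (c : G) (s : Finset G) : Finset G :=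
  (s.filter (β c · ≠ 1)).image (c + ·)

theorem add_mem_bracketSupport {c a : G} {s : Finset G} :
    c + a ∈ bracketSupport β c s ↔ a ∈ s ∧ β c a ≠ 1 := by
  simp [bracketSupport]

theorem mem_bracketSupport {c b : G} {s : Finset G} :
    b ∈ bracketSupport β c s ↔ b - c ∈ s ∧ β c (b - c) ≠ 1 := by
  rw [← add_mem_bracketSupport, add_sub_cancel]

theorem card_bracketSupport {c : G} {s : Finset G} (h : ∀ a ∈ s, β c a ≠ 1) :
    (bracketSupport β c s).card = s.card := by
  classical
  rw [bracketSupport, Finset.card_image_of_injective _ (add_right_injective c),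
    Finset.filter_true_of_mem h]

section MinimalSupport

variable {R : Set G} {P : Finset G → Prop} {s : Finset G}

theorem forall_ne_one_of_minimal
    (hP : ∀ s c, P s → c ∈ R → (∃ a ∈ s, β c a ≠ 1) → P (bracketSupport β c s))
    (hs : P s) (hmin : ∀ t, P t → s.card ≤ t.card) {c p : G} (hc : c ∈ R) (hp : p ∈ s)
    (hcp : β c p ≠ 1) :
    ∀ a ∈ s, β c a ≠ 1 := by
  classical
  have hle := hmin _ (hP s c hs hc ⟨p, hp, hcp⟩)
  rw [bracketSupport, Finset.card_image_of_injective _ (add_right_injective c)] at hle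
  exact Finset.filter_eq_self.mp (Finset.eq_of_subset_of_card_le (Finset.filter_subset _ s) hle)

theorem map_eq_one_of_minimal (hβ : IsAltBichar β) (hPR : ∀ s, P s → ↑s ⊆ R)
    (hP : ∀ s c, P s → c ∈ R → (∃ a ∈ s, β c a ≠ 1) → P (bracketSupport β c s))
    (hs : P s) (hmin : ∀ t, P t → s.card ≤ t.card) {p q : G} (hp : p ∈ s) (hq : q ∈ s) :
    β p q = 1 := by
  by_contra hpq
  exact forall_ne_one_of_minimal hP hs hmin (hPR s hs hp) hq hpq p hp (hβ.2 p)

theorem map_eq_map_of_minimal (hβ : IsAltBichar β) (hPR : ∀ s, P s → ↑s ⊆ R)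
    (hP : ∀ s c, P s → c ∈ R → (∃ a ∈ s, β c a ≠ 1) → P (bracketSupport β c s))
    (hs : P s) (hmin : ∀ t, P t → s.card ≤ t.card) {c p q : G} (hc : c ∈ R) (hp : p ∈ s)
    (hq : q ∈ s) : β c p = β c q := by
  by_cases hsc : ∀ a ∈ s, β c a = 1
  · rw [hsc p hp, hsc q hq]
  obtain ⟨a, ha, hca⟩ : ∃ a ∈ s, β c a ≠ 1 := by simpa using hsc
  have hall := forall_ne_one_of_minimal hP hs hmin hc ha hca
  have hmin' : ∀ t, P t → (bracketSupport β c s).card ≤ t.card := by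
    rwa [card_bracketSupport hall]
  have h := map_eq_one_of_minimal hβ hPR hP (hP s c hs hc ⟨a, ha, hca⟩) hmin'
    (add_mem_bracketSupport.mpr ⟨hq, hall q hq⟩) (add_mem_bracketSupport.mpr ⟨hp, hall p hp⟩)
  rwa [hβ.1.1, hβ.1.2, hβ.1.2, hβ.2 c, map_eq_one_of_minimal hβ hPR hP hs hmin hq hp,
    hβ.map_swap c q, one_mul, mul_one, mul_inv_eq_one] at h

theorem eq_of_minimal (hβ : IsAltBichar β) (hR : AddSubgroup.closure R = ⊤)
    (hred : ∀ g : G, (∀ h : G, β g h = 1) → g = 0) (hPR : ∀ s, P s → ↑s ⊆ R)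
    (hP : ∀ s c, P s → c ∈ R → (∃ a ∈ s, β c a ≠ 1) → P (bracketSupport β c s))
    (hs : P s) (hmin : ∀ t, P t → s.card ≤ t.card) {p q : G} (hp : p ∈ s) (hq : q ∈ s) :
    p = q := by
  rw [← sub_eq_zero]
  refine hred _ fun g => ?_
  rw [hβ.map_swap, inv_eq_one]
  refine hβ.1.map_eq_one_of_closure_eq_top hR (fun c hc => ?_) g
  rw [hβ.1.map_sub_right, mul_inv_eq_one]
  exact map_eq_map_of_minimal hβ hPR hP hs hmin hc hp hq

end MinimalSupport

variable {A : Type*} [Ring A] [Algebra F A] {ξ : G → G → Fˣ} {u : G → A} {R : Set G}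

theorem commutator_eq (hmul : ∀ a b : G, u a * u b = (ξ a b : F) • u (a + b)) (x y : G) :
    u x * u y - u y * u x = bracketCoeff ξ x y • u (x + y) := by
  rw [hmul, hmul, add_comm y, bracketCoeff, sub_smul]

theorem commutator_sum_eq (hmul : ∀ a b : G, u a * u b = (ξ a b : F) • u (a + b))
    (hΨ : ∀ a b : G, ξ a b * (ξ b a)⁻¹ = β a b) (c : G) (s : Finset G) (f : G → F) :
    u c * ∑ a ∈ s, f a • u a - (∑ a ∈ s, f a • u a) * u c =
      ∑ b ∈ bracketSupport β c s, (f (b - c) * bracketCoeff ξ c (b - c)) • u b := by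
  classical
  rw [bracketSupport, Finset.sum_image fun _ _ _ _ h => add_left_cancel h]
  simp only [add_sub_cancel_left]
  rw [Finset.sum_filter_of_ne (p := (β c · ≠ 1)) fun a _ h hca => h (by
    rw [(bracketCoeff_eq_zero_iff hΨ c a).mpr hca, mul_zero, zero_smul])]
  simp only [Finset.mul_sum, Finset.sum_mul, ← Finset.sum_sub_distrib, mul_smul_comm,
    smul_mul_assoc, ← smul_sub, commutator_eq hmul, smul_smul]

theorem IsRootSupport.bracketSupport (hmul : ∀ a b : G, u a * u b = (ξ a b : F) • u (a + b))
    (hΨ : ∀ a b : G, ξ a b * (ξ b a)⁻¹ = β a b)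
    (hadd : ∀ a ∈ R, ∀ b ∈ R, β a b ≠ 1 → a + b ∈ R)
    {I : Submodule F A} (hI : ∀ c ∈ R, ∀ y ∈ I, u c * y - y * u c ∈ I) {s : Finset G} {c : G}
    (hs : IsRootSupport I u R s) (hc : c ∈ R) (hsc : ∃ a ∈ s, β c a ≠ 1) :
    IsRootSupport I u R (bracketSupport β c s) := by
  obtain ⟨-, hsR, f, hf, hfI⟩ := hs
  obtain ⟨a, ha, hca⟩ := hsc
  refine ⟨⟨c + a, add_mem_bracketSupport.mpr ⟨ha, hca⟩⟩, fun b hb => ?_,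
    fun b => f (b - c) * bracketCoeff ξ c (b - c), fun b hb => ?_, ?_⟩
  · obtain ⟨hbs, hcb⟩ := mem_bracketSupport.mp hb
    simpa using hadd c hc _ (hsR hbs) hcb
  · obtain ⟨hbs, hcb⟩ := mem_bracketSupport.mp hb
    exact mul_ne_zero (hf _ hbs) ((bracketCoeff_eq_zero_iff hΨ c _).not.mpr hcb)
  · rw [← commutator_sum_eq hmul hΨ]
    exact hI c hc _ hfI

theorem exists_basis_mem_of_ne_bot (hβ : IsAltBichar β) (hR : AddSubgroup.closure R = ⊤)
    (hred : ∀ g : G, (∀ h : G, β g h = 1) → g = 0)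
    (hmul : ∀ a b : G, u a * u b = (ξ a b : F) • u (a + b))
    (hΨ : ∀ a b : G, ξ a b * (ξ b a)⁻¹ = β a b)
    (hadd : ∀ a ∈ R, ∀ b ∈ R, β a b ≠ 1 → a + b ∈ R) {I : Submodule F A}
    (hI : ∀ c ∈ R, ∀ y ∈ I, u c * y - y * u c ∈ I) (hIle : I ≤ Submodule.span F (u '' R))
    (hbot : I ≠ ⊥) : ∃ p ∈ R, u p ∈ I := by
  obtain ⟨s, hs, hmin⟩ := (measure Finset.card).wf.has_min {s | IsRootSupport I u R s}
    (exists_isRootSupport hIle hbot)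
  obtain ⟨p, hp⟩ := hs.1
  have hsp : s = {p} := Finset.eq_singleton_iff_unique_mem.mpr ⟨hp, fun q hq =>
    eq_of_minimal hβ hR hred (fun _ ht => ht.2.1)
      (fun _ _ ht hc hsc => IsRootSupport.bracketSupport hmul hΨ hadd hI ht hc hsc) hs
      (fun t ht => not_lt.mp (hmin t ht)) hq hp⟩
  obtain ⟨-, hsR, f, hf, hfI⟩ := hs
  subst hsp
  rw [Finset.sum_singleton] at hfI
  exact ⟨p, hsR hp, (I.smul_mem_iff (hf p hp)).mp hfI⟩

theorem basis_add_mem (hmul : ∀ a b : G, u a * u b = (ξ a b : F) • u (a + b))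
    (hΨ : ∀ a b : G, ξ a b * (ξ b a)⁻¹ = β a b) {I : Submodule F A}
    (hI : ∀ c ∈ R, ∀ y ∈ I, u c * y - y * u c ∈ I) {c x : G} (hc : c ∈ R) (hx : u x ∈ I)
    (hcx : β c x ≠ 1) : u (c + x) ∈ I := by
  have h := hI c hc _ hx
  rwa [commutator_eq hmul, I.smul_mem_iff ((bracketCoeff_eq_zero_iff hΨ c x).not.mpr hcx)] at h

theorem basis_mem_of_reflTransGen (hβ : IsAltBichar β)
    (hmul : ∀ a b : G, u a * u b = (ξ a b : F) • u (a + b))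
    (hΨ : ∀ a b : G, ξ a b * (ξ b a)⁻¹ = β a b) (hneg : ∀ a ∈ R, -a ∈ R) {I : Submodule F A}
    (hI : ∀ c ∈ R, ∀ y ∈ I, u c * y - y * u c ∈ I) {p b : G}
    (hpb : Relation.ReflTransGen (fun x y : G => x ∈ R ∧ y ∈ R ∧ β x y ≠ 1) p b)
    (hp : u p ∈ I) : u b ∈ I := by
  induction hpb with
  | refl => exact hp
  | @tail x y _ hxy ih =>
    obtain ⟨hx, hy, hxy⟩ := hxy
    have hyx : u (y + x) ∈ I := basis_add_mem hmul hΨ hI hy ih <| by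
      rwa [hβ.map_swap, ne_eq, inv_eq_one]
    have h := basis_add_mem hmul hΨ hI (hneg x hx) hyx <| by
      rwa [hβ.1.map_neg_left, hβ.1.2, hβ.2, mul_one, ne_eq, inv_eq_one]
    rwa [add_comm y x, neg_add_cancel_left] at h

end SkewRootLie

end

open SkewRootLie

theorem skewRootLie_reduced_indecomposable_simple_general
    {G : Type*} [AddCommGroup G] {F : Type*} [Field F]
    {A : Type*} [Ring A] [Algebra F A]
    (β ξ : G → G → Fˣ) (hβ : IsAltBichar β) (hβnt : ∃ g h : G, β g h ≠ 1)
    (hΨ : ∀ a b : G, ξ a b * (ξ b a)⁻¹ = β a b)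
    (hred : ∀ g : G, (∀ h : G, β g h = 1) → g = 0)
    (R : Set G) (hR : IsSkewRootLie β R)
    (hconn : ∀ a ∈ R, ∀ b ∈ R,
      Relation.ReflTransGen (fun x y : G => x ∈ R ∧ y ∈ R ∧ β x y ≠ 1) a b)
    (u : G → A) (hind : LinearIndependent F u)
    (hmul : ∀ a b : G, u a * u b = (ξ a b : F) • u (a + b)) :
    (∃ x ∈ Submodule.span F (u '' R), ∃ y ∈ Submodule.span F (u '' R), x * y - y * x ≠ 0) ∧
    (∀ I : Submodule F A, I ≤ Submodule.span F (u '' R) →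
      (∀ x ∈ Submodule.span F (u '' R), ∀ y ∈ I, x * y - y * x ∈ I) →
      I ≠ ⊥ → I = Submodule.span F (u '' R)) := by
  obtain ⟨-, hgen, hneg, hadd⟩ := hR
  refine ⟨?_, fun I hIle hI hbot => ?_⟩
  · obtain ⟨a, ha, b, hb, hab⟩ := hβ.exists_mem_mem_ne_one hgen hβnt
    refine ⟨u a, Submodule.subset_span ⟨a, ha, rfl⟩, u b, Submodule.subset_span ⟨b, hb, rfl⟩, ?_⟩
    rw [commutator_eq hmul]
    exact smul_ne_zero ((bracketCoeff_eq_zero_iff hΨ a b).not.mpr hab) (hind.ne_zero _)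
  · have hIR : ∀ c ∈ R, ∀ y ∈ I, u c * y - y * u c ∈ I :=
      fun c hc => hI (u c) (Submodule.subset_span ⟨c, hc, rfl⟩)
    obtain ⟨p, hp, hup⟩ := exists_basis_mem_of_ne_bot hβ hgen hred hmul hΨ hadd hIR hIle hbot
    refine le_antisymm hIle (Submodule.span_le.mpr ?_)
    rintro _ ⟨b, hb, rfl⟩
    exact basis_mem_of_reflTransGen hβ hmul hΨ hneg hIR (hconn p hp b hb) hup

/-- Let `(G,β,R)` be a reduced (nonsingular) and indecomposable (connected graph) skew
root system of Lie type.  Then `L(R) = ⊕_{a ∈ R} F u_a`, a subalgebra of the twisted group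
algebra under the commutator bracket, is a simple Lie algebra: it is nonabelian and its
only nonzero Lie ideal is `L(R)` itself. -/
theorem skewRootLie_reduced_indecomposable_simple
    {G : Type*} [AddCommGroup G] {F : Type*} [Field F] [IsAlgClosed F] [CharZero F]
    {A : Type*} [Ring A] [Algebra F A]
    (β ξ : G → G → Fˣ) (hβ : IsAltBichar β) (hβnt : ∃ g h : G, β g h ≠ 1)
    (hξ : IsCocycle ξ) (hΨ : ∀ a b : G, ξ a b * (ξ b a)⁻¹ = β a b)
    (hred : ∀ g : G, (∀ h : G, β g h = 1) → g = 0)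
    (R : Set G) (hR : IsSkewRootLie β R)
    (hconn : ∀ a ∈ R, ∀ b ∈ R,
      Relation.ReflTransGen (fun x y : G => x ∈ R ∧ y ∈ R ∧ β x y ≠ 1) a b)
    (u : G → A) (hind : LinearIndependent F u)
    (hmul : ∀ a b : G, u a * u b = (ξ a b : F) • u (a + b)) :
    (∃ x ∈ Submodule.span F (u '' R), ∃ y ∈ Submodule.span F (u '' R), x * y - y * x ≠ 0) ∧
    (∀ I : Submodule F A, I ≤ Submodule.span F (u '' R) →
      (∀ x ∈ Submodule.span F (u '' R), ∀ y ∈ I, x * y - y * x ∈ I) →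
      I ≠ ⊥ → I = Submodule.span F (u '' R)) :=
  skewRootLie_reduced_indecomposable_simple_general β ξ hβ hβnt hΨ hred R hR hconn u hind hmul
end

section
/- Let G be a finite abelian group and (G,β,R) a skew root system of Jordan type. Then the canonical symmetric bilinear form τ(u,v) = tr L(u∘v) on J(R) is nondegenerate; in particular τ(u_g, u_h) = 0 when g+h ≠ 0 and τ(u_g, u_{−g}) = ξ(−g,g) · dim J(R) ≠ 0, and every u_g is invertible in J(R) with inverse ξ(g,g) u_{−g}. Hence the grading on J(R) is a multiplicity free division grading. -/
/-- `R` is a skew root system of Jordan type in `(G, β)`. -/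
def IsSkewRootJordan {G : Type*} [AddCommGroup G] {F : Type*} [Field F]
    (β : G → G → Fˣ) (R : Set G) : Prop :=
  AddSubgroup.closure R = ⊤ ∧ (∀ a ∈ R, -a ∈ R) ∧
  ∀ a ∈ R, ∀ b ∈ R, β a b ≠ -1 → a + b ∈ R

/-- The Jordan multiplication operator `L(x) : y ↦ x ∘ y = (xy + yx)/2` on an associative
`F`-algebra. -/
noncomputable def jordanOp (F : Type*) [Field F] {A : Type*} [Ring A] [Algebra F A]
    (x : A) : A →ₗ[F] A :=
  (1/2 : F) • (LinearMap.mulLeft F x + LinearMap.mulRight F x)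

/-!
In the basis `(u_a)`, `L(u_t ∘ u_h)` sends `u_a` to a multiple of `u_{t+h+a}`, so it has a nonzero
diagonal entry only when `t = -h`, and then it is the scalar `ξ(-h,h)`. Hence for `x ∈ J` the
trace of `L(x ∘ u_h)` on `J` is `|R| ξ(-h,h)` times the `u_{-h}`-coordinate of `x`. This gives the
values of `τ` on basis elements and, since `R = -R`, pairs a nonzero `x` having a nonzero
`u_g`-coordinate with `u_{-g} ∈ J`. Finally `ξ(g,g) u_{-g}` is a two-sided associative inverse
of `u_g`, and an associative inverse is a Jordan inverse.
-/

namespace IsBichar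

variable {G : Type*} [AddCommGroup G] {F : Type*} [Field F] {ξ : G → G → Fˣ}

theorem map_zero_left_s16 (hξ : IsBichar ξ) (b : G) : ξ 0 b = 1 := by
  simpa using hξ.1 0 0 b

theorem map_zero_right_s16 (hξ : IsBichar ξ) (a : G) : ξ a 0 = 1 := by
  simpa using hξ.2 a 0 0

theorem map_neg_left_s16 (hξ : IsBichar ξ) (a b : G) : ξ (-a) b = (ξ a b)⁻¹ :=
  eq_inv_of_mul_eq_one_left (by rw [← hξ.1, neg_add_cancel, hξ.map_zero_left_s16])

theorem map_neg_right_s16 (hξ : IsBichar ξ) (a b : G) : ξ a (-b) = (ξ a b)⁻¹ :=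
  eq_inv_of_mul_eq_one_left (by rw [← hξ.2, neg_add_cancel, hξ.map_zero_right_s16])

end IsBichar

namespace LinearIndependent

variable {ι K V : Type*} [Field K] [AddCommGroup V] [Module K V] {u : ι → V}
  (hu : LinearIndependent K u)

/-- The `i`-th coordinate with respect to `u`, extended to all of `V` through a completion of `u`
to a basis. -/
noncomputable def coordExtend (i : ι) : V →ₗ[K] K :=
  (Module.Basis.sumExtend hu).coord (Sum.inl i)

theorem coordExtend_apply [DecidableEq ι] (i j : ι) :
    hu.coordExtend i (u j) = if j = i then 1 else 0 := by
  classical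
  have hj : Module.Basis.sumExtend hu (Sum.inl j) = u j := by
    rw [Module.Basis.sumExtend, Module.Basis.reindex_apply, Module.Basis.coe_extend]
    rfl
  rw [coordExtend, ← hj, Module.Basis.coord_apply, Module.Basis.repr_self, Finsupp.single_apply]
  simp only [Sum.inl.injEq]

noncomputable def basisSpanImage (s : Set ι) : Module.Basis s K (Submodule.span K (u '' s)) :=
  (Module.Basis.span (hu.comp ((↑) : s → ι) Subtype.val_injective)).map
    (LinearEquiv.ofEq _ _ (by rw [Set.range_comp, Subtype.range_coe]))

theorem basisSpanImage_apply (s : Set ι) (i : s) : (hu.basisSpanImage s i : V) = u i := by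
  simp only [basisSpanImage, Module.Basis.map_apply, LinearEquiv.coe_ofEq_apply,
    Module.Basis.span_apply, Function.comp_apply]

theorem basisSpanImage_repr_apply {s : Set ι} (x : Submodule.span K (u '' s)) (i : s) :
    (hu.basisSpanImage s).repr x i = hu.coordExtend i x := by
  classical
  have hlin : Finsupp.lapply i ∘ₗ ((hu.basisSpanImage s).repr : _ →ₗ[K] s →₀ K) =
      hu.coordExtend i ∘ₗ (Submodule.span K (u '' s)).subtype := by
    refine (hu.basisSpanImage s).ext fun j => ?_
    simp only [LinearMap.comp_apply, LinearEquiv.coe_coe, Module.Basis.repr_self,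
      Finsupp.lapply_apply, Finsupp.single_apply, Submodule.subtype_apply, basisSpanImage_apply,
      coordExtend_apply, Subtype.ext_iff]
  exact LinearMap.congr_fun hlin x

theorem exists_coordExtend_ne_zero {s : Set ι} {x : V} (hx : x ∈ Submodule.span K (u '' s))
    (hx0 : x ≠ 0) : ∃ i ∈ s, hu.coordExtend i x ≠ 0 := by
  by_contra! hzero
  have hrepr : (hu.basisSpanImage s).repr ⟨x, hx⟩ = 0 :=
    Finsupp.ext fun i => by rw [basisSpanImage_repr_apply, hzero i i.2, Finsupp.zero_apply]
  exact hx0 (congrArg Subtype.val ((hu.basisSpanImage s).repr.map_eq_zero_iff.mp hrepr))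

theorem trace_restrict_span_image {s : Set ι} [Fintype s] (f : V →ₗ[K] V)
    (hf : ∀ x ∈ Submodule.span K (u '' s), f x ∈ Submodule.span K (u '' s)) :
    LinearMap.trace K _ (f.restrict hf) = ∑ i : s, hu.coordExtend i (f (u i)) := by
  classical
  rw [LinearMap.trace_eq_matrix_trace K (hu.basisSpanImage s), Matrix.trace]
  refine Finset.sum_congr rfl fun i _ => ?_
  rw [Matrix.diag_apply, LinearMap.toMatrix_apply, basisSpanImage_repr_apply,
    LinearMap.coe_restrict_apply, basisSpanImage_apply]

end LinearIndependent

section JordanOp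

variable {F : Type*} [Field F] {A : Type*} [Ring A] [Algebra F A]

theorem jordanOp_apply (x y : A) : jordanOp F x y = (1/2 : F) • (x * y + y * x) := rfl

theorem jordanOp_comm (x y : A) : jordanOp F x y = jordanOp F y x := by
  rw [jordanOp_apply, jordanOp_apply, add_comm]

theorem jordanOp_eq_one_of_mul_eq_one [NeZero (2 : F)] {x v : A} (hxv : x * v = 1)
    (hvx : v * x = 1) : jordanOp F x v = 1 ∧ jordanOp F (jordanOp F x x) v = x := by
  have half_smul_add_self : ∀ y : A, (1/2 : F) • (y + y) = y := fun y => by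
    rw [← two_smul F y, smul_smul, one_div, inv_mul_cancel₀ two_ne_zero, one_smul]
  have hsq : jordanOp F x x = x * x := by rw [jordanOp_apply, half_smul_add_self]
  refine ⟨by rw [jordanOp_apply, hxv, hvx, half_smul_add_self], ?_⟩
  rw [hsq, jordanOp_apply, mul_assoc, hxv, ← mul_assoc, hvx, mul_one, one_mul, half_smul_add_self]

end JordanOp

noncomputable def jordanCoeff {G : Type*} {F : Type*} [Field F] (ξ : G → G → Fˣ) (a b : G) : F :=
  ((ξ a b : F) + ξ b a) / 2

section TwistedGroupAlgebra

variable {G : Type*} [AddCommGroup G] {F : Type*} [Field F] {A : Type*} [Ring A] [Algebra F A]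
  {ξ : G → G → Fˣ} {u : G → A}

theorem jordanCoeff_zero_right [NeZero (2 : F)] (hξ : IsBichar ξ) (a : G) :
    jordanCoeff ξ a 0 = 1 := by
  rw [jordanCoeff, hξ.map_zero_left_s16, hξ.map_zero_right_s16, Units.val_one, add_self_div_two]

theorem jordanCoeff_neg_self [NeZero (2 : F)] (hξ : IsBichar ξ) (g : G) :
    jordanCoeff ξ (-g) g = ξ (-g) g := by
  rw [jordanCoeff, hξ.map_neg_right_s16, ← hξ.map_neg_left_s16, add_self_div_two]

theorem mul_smul_neg_eq_one (hξ : IsBichar ξ) (hone : u 0 = 1)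
    (hmul : ∀ a b : G, u a * u b = (ξ a b : F) • u (a + b)) (g : G) :
    u g * ((ξ g g : F) • u (-g)) = 1 ∧ ((ξ g g : F) • u (-g)) * u g = 1 := by
  rw [mul_smul_comm, smul_mul_assoc, hmul, hmul, add_neg_cancel, neg_add_cancel, hone,
    hξ.map_neg_right_s16, hξ.map_neg_left_s16, smul_smul, Units.mul_inv, one_smul, and_self]

theorem jordanOp_apply_twisted (hmul : ∀ a b : G, u a * u b = (ξ a b : F) • u (a + b))
    (a b : G) : jordanOp F (u a) (u b) = jordanCoeff ξ a b • u (a + b) := by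
  rw [jordanOp_apply, hmul, hmul, add_comm b a, ← add_smul, smul_smul, jordanCoeff]
  ring_nf

theorem trace_restrict_jordanOp_jordanOp_twisted [NeZero (2 : F)] (hξ : IsBichar ξ)
    (hind : LinearIndependent F u) (hmul : ∀ a b : G, u a * u b = (ξ a b : F) • u (a + b))
    {R : Set G} [Fintype R] {x : A} (hx : x ∈ Submodule.span F (u '' R)) (h : G)
    (hst : ∀ z ∈ Submodule.span F (u '' R),
      jordanOp F (jordanOp F x (u h)) z ∈ Submodule.span F (u '' R)) :
    LinearMap.trace F _ ((jordanOp F (jordanOp F x (u h))).restrict hst) =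
      Fintype.card R * (jordanCoeff ξ h (-h) * hind.coordExtend (-h) x) := by
  classical
  have hdiag : ∀ a : G, hind.coordExtend a (jordanOp F (jordanOp F x (u h)) (u a)) =
      jordanCoeff ξ h (-h) * hind.coordExtend (-h) x := by
    intro a
    -- both sides are linear in `x`, so it suffices to compare them on the `u t`
    have hbasis : Set.EqOn (hind.coordExtend a ∘ₗ jordanOp F (u a) ∘ₗ jordanOp F (u h))
        (jordanCoeff ξ h (-h) • hind.coordExtend (-h) : A →ₗ[F] F) (u '' R) := by
      rintro _ ⟨t, -, rfl⟩
      simp only [LinearMap.comp_apply, LinearMap.smul_apply, smul_eq_mul,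
        jordanOp_apply_twisted hmul, map_smul, hind.coordExtend_apply]
      by_cases ht : t = -h
      · rw [if_pos ht, ht, add_neg_cancel, add_zero, if_pos rfl, jordanCoeff_zero_right hξ,
          mul_one]
      · rw [if_neg ht, if_neg (by rwa [add_eq_left, add_comm, ← eq_neg_iff_add_eq_zero]),
          mul_zero, mul_zero, mul_zero]
    rw [jordanOp_comm, jordanOp_comm x]
    exact LinearMap.eqOn_span' hbasis hx
  simp only [hind.trace_restrict_span_image, hdiag, Finset.sum_const, Finset.card_univ,
    nsmul_eq_mul]

end TwistedGroupAlgebra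

theorem skewRootJordan_trace_form_nondegenerate_general
    {G : Type*} [AddCommGroup G] [Finite G]
    {F : Type*} [Field F] [CharZero F]
    {A : Type*} [Ring A] [Algebra F A]
    (β ξ : G → G → Fˣ)
    (hξ : IsBichar ξ)
    (R : Set G) (hR : IsSkewRootJordan β R)
    (u : G → A) (hind : LinearIndependent F u) (hone : u 0 = 1)
    (hmul : ∀ a b : G, u a * u b = (ξ a b : F) • u (a + b))
    (J : Submodule F A) (hJ : J = Submodule.span F (u '' R)) :
    (∀ g ∈ R, ∀ h ∈ R, g + h ≠ 0 →
      ∀ (hst : ∀ x ∈ J, jordanOp F (jordanOp F (u g) (u h)) x ∈ J),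
        LinearMap.trace F ↥J ((jordanOp F (jordanOp F (u g) (u h))).restrict hst) = 0) ∧
    (∀ g ∈ R, ∀ (hst : ∀ x ∈ J, jordanOp F (jordanOp F (u g) (u (-g))) x ∈ J),
        LinearMap.trace F ↥J ((jordanOp F (jordanOp F (u g) (u (-g)))).restrict hst) =
          (ξ (-g) g : F) * (Nat.card R : F) ∧
        LinearMap.trace F ↥J ((jordanOp F (jordanOp F (u g) (u (-g)))).restrict hst) ≠ 0) ∧
    (∀ g ∈ R, jordanOp F (u g) ((ξ g g : F) • u (-g)) = 1 ∧
        jordanOp F (jordanOp F (u g) (u g)) ((ξ g g : F) • u (-g)) = u g) ∧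
    (∀ x ∈ J, x ≠ 0 → ∃ y ∈ J,
      ∀ (hst : ∀ z ∈ J, jordanOp F (jordanOp F x y) z ∈ J),
        LinearMap.trace F ↥J ((jordanOp F (jordanOp F x y)).restrict hst) ≠ 0) := by
  classical
  subst hJ
  have := Fintype.ofFinite R
  have hmem : ∀ g ∈ R, u g ∈ Submodule.span F (u '' R) := fun g hg ↦
    Submodule.subset_span ⟨g, hg, rfl⟩
  have hcard (g : G) (hg : g ∈ R) : (Fintype.card R : F) ≠ 0 :=
    Nat.cast_ne_zero.mpr (Fintype.card_pos_iff.mpr ⟨⟨g, hg⟩⟩).ne'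
  refine ⟨fun g hg h _ hgh hst ↦ ?_, fun g hg hst ↦ ?_, fun g _ ↦ ?_, fun x hx hx0 ↦ ?_⟩
  · rw [trace_restrict_jordanOp_jordanOp_twisted hξ hind hmul (hmem g hg), hind.coordExtend_apply,
      if_neg (by rwa [eq_neg_iff_add_eq_zero]), mul_zero, mul_zero]
  · have htrace : LinearMap.trace F _ ((jordanOp F (jordanOp F (u g) (u (-g)))).restrict hst) =
        (ξ (-g) g : F) * (Nat.card R : F) := by
      rw [trace_restrict_jordanOp_jordanOp_twisted hξ hind hmul (hmem g hg), neg_neg,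
        hind.coordExtend_apply, if_pos rfl, jordanCoeff_neg_self hξ, Nat.card_eq_fintype_card]
      ring
    refine ⟨htrace, ?_⟩
    rw [htrace, Nat.card_eq_fintype_card]
    exact mul_ne_zero (Units.ne_zero _) (hcard g hg)
  · obtain ⟨hright, hleft⟩ := mul_smul_neg_eq_one hξ hone hmul g
    exact jordanOp_eq_one_of_mul_eq_one hright hleft
  · obtain ⟨g, hg, hxg⟩ := hind.exists_coordExtend_ne_zero hx hx0
    refine ⟨u (-g), hmem _ (hR.2.1 g hg), fun hst ↦ ?_⟩
    rw [trace_restrict_jordanOp_jordanOp_twisted hξ hind hmul hx, neg_neg, jordanCoeff_neg_self hξ]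
    exact mul_ne_zero (hcard g hg) (mul_ne_zero (Units.ne_zero _) hxg)

/-- Let `G` be a finite abelian group and `(G,β,R)` a skew root system of Jordan type,
`ξ` a bicharacter with `Ψ(ξ)=β`, and `J = J(R) = ⊕_{a∈R} F u_a` the corresponding Jordan
subalgebra of the twisted group algebra.  The canonical symmetric bilinear form
`τ(u,v) = tr L(u ∘ v)` on `J(R)` is nondegenerate; in particular `τ(u_g,u_h) = 0` for
`g+h ≠ 0`, `τ(u_g,u_{-g}) = ξ(-g,g) · dim J(R) ≠ 0`, and every `u_g` is invertible in the
Jordan algebra `J(R)` with inverse `ξ(g,g) u_{-g}`; hence the grading on `J(R)` is a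
multiplicity free division grading. -/
theorem skewRootJordan_trace_form_nondegenerate
    {G : Type*} [AddCommGroup G] [Finite G]
    {F : Type*} [Field F] [IsAlgClosed F] [CharZero F]
    {A : Type*} [Ring A] [Algebra F A]
    (β ξ : G → G → Fˣ) (hβ : IsAltBichar β)
    (hξ : IsBichar ξ) (hΨ : ∀ a b : G, ξ a b * (ξ b a)⁻¹ = β a b)
    (R : Set G) (hR : IsSkewRootJordan β R)
    (u : G → A) (hind : LinearIndependent F u) (hone : u 0 = 1)
    (hmul : ∀ a b : G, u a * u b = (ξ a b : F) • u (a + b))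
    (J : Submodule F A) (hJ : J = Submodule.span F (u '' R)) :
    (∀ g ∈ R, ∀ h ∈ R, g + h ≠ 0 →
      ∀ (hst : ∀ x ∈ J, jordanOp F (jordanOp F (u g) (u h)) x ∈ J),
        LinearMap.trace F ↥J ((jordanOp F (jordanOp F (u g) (u h))).restrict hst) = 0) ∧
    (∀ g ∈ R, ∀ (hst : ∀ x ∈ J, jordanOp F (jordanOp F (u g) (u (-g))) x ∈ J),
        LinearMap.trace F ↥J ((jordanOp F (jordanOp F (u g) (u (-g)))).restrict hst) =
          (ξ (-g) g : F) * (Nat.card R : F) ∧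
        LinearMap.trace F ↥J ((jordanOp F (jordanOp F (u g) (u (-g)))).restrict hst) ≠ 0) ∧
    (∀ g ∈ R, jordanOp F (u g) ((ξ g g : F) • u (-g)) = 1 ∧
        jordanOp F (jordanOp F (u g) (u g)) ((ξ g g : F) • u (-g)) = u g) ∧
    (∀ x ∈ J, x ≠ 0 → ∃ y ∈ J,
      ∀ (hst : ∀ z ∈ J, jordanOp F (jordanOp F x y) z ∈ J),
        LinearMap.trace F ↥J ((jordanOp F (jordanOp F x y)).restrict hst) ≠ 0) :=
  skewRootJordan_trace_form_nondegenerate_general β ξ hξ R hR u hind hone hmul J hJ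
end
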